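/- arXiv:1311.1731 — 4 statements merged into one kernel-verified Lean document; each statement's English description precedes it below -/
import Mathlib

section
/- Almost surely, the conditional expectation of the estimator d̂_{ij} given (u_i, u_j) equals d_{ij}; in particular, the estimator d̂_{ij} is an unbiased estimator of the distance d_{ij}. -/
open MeasureTheory ProbabilityTheory

/-- The estimator `r̂_{ij}^k` built from the observed graphs `G_0, …, G_{2T-1}`. -/
noncomputable def rhat {Ω : Type*} {n : ℕ} (T : ℕ) (G : ℕ → Fin n → Fin n → Ω → ℝ)
    (i j k : Fin n) (ω : Ω) : ℝ :=
  (1 / (T : ℝ) ^ 2) * (∑ t ∈ Finset.range T, G t i k ω) *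
    (∑ t ∈ Finset.Ico T (2 * T), G t j k ω)

/-- The estimator `ĉ_{ij}^k` built from the observed graphs `G_0, …, G_{2T-1}`. -/
noncomputable def chat {Ω : Type*} {n : ℕ} (T : ℕ) (G : ℕ → Fin n → Fin n → Ω → ℝ)
    (i j k : Fin n) (ω : Ω) : ℝ :=
  (1 / (T : ℝ) ^ 2) * (∑ t ∈ Finset.range T, G t k i ω) *
    (∑ t ∈ Finset.Ico T (2 * T), G t k j ω)

/-- The estimator `d̂_{ij}`, averaging over the neighbourhood `𝒮 = {1,…,n} \ {i,j}`,
whose cardinality is `n - 2`. -/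
noncomputable def dhat {Ω : Type*} {n : ℕ} (T : ℕ) (G : ℕ → Fin n → Fin n → Ω → ℝ)
    (i j : Fin n) (ω : Ω) : ℝ :=
  (1 / (2 * ((n : ℝ) - 2))) * ∑ k ∈ ({i, j}ᶜ : Finset (Fin n)),
    ((rhat T G i i k ω - rhat T G i j k ω - rhat T G j i k ω + rhat T G j j k ω) +
      (chat T G i i k ω - chat T G i j k ω - chat T G j i k ω + chat T G j j k ω))

/-- The distance `d(x,y) = ½(∫₀¹ (w(s,x)−w(s,y))² ds + ∫₀¹ (w(x,t)−w(y,t))² dt)`. -/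
noncomputable def graphonDist (w : ℝ → ℝ → ℝ) (x y : ℝ) : ℝ :=
  (1 / 2) * ((∫ s in (0:ℝ)..1, (w s x - w s y) ^ 2) + (∫ t in (0:ℝ)..1, (w x t - w y t) ^ 2))

/-- The σ-algebra generated by the labels `u_1, …, u_n`. -/
def sigmaAlgebraOf {Ω : Type*} [MeasurableSpace Ω] {n : ℕ} (u : Fin n → Ω → ℝ) :
    MeasurableSpace Ω :=
  MeasurableSpace.comap (fun ω k => u k ω) MeasurableSpace.pi

/-!
Conditionally on the labels `u`, the edge indicators at distinct times are independent with
`E[G_t[a,b] | u] = w(u_a,u_b)`, and the two factors of `r̂` and `ĉ` use disjoint halves of the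
observations. Hence `E[r̂_{ab}^k | u] = w(u_a,u_k) w(u_b,u_k)` and
`E[ĉ_{ab}^k | u] = w(u_k,u_a) w(u_k,u_b)`, so the `k`-th summand of `d̂_{ij}` has conditional
expectation `(w(u_i,u_k) - w(u_j,u_k))² + (w(u_k,u_i) - w(u_k,u_j))²`. As `u_k` is uniform and
independent of `(u_i, u_j)`, conditioning on `(u_i, u_j)` integrates `u_k` out and leaves
`2 d_{ij}` for every `k ∉ {i, j}`; the tower property concludes.
-/

open Finset

section CondExp

variable {Ω : Type*} {m mΩ : MeasurableSpace Ω} {μ : Measure Ω}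

lemma condExp_const_mul_sum_ae_eq {ι : Type*} {s : Finset ι} {f g : ι → Ω → ℝ} (c : ℝ)
    (hf : ∀ i ∈ s, Integrable (f i) μ) (hfg : ∀ i ∈ s, μ[f i|m] =ᵐ[μ] g i) :
    μ[fun ω => c * ∑ i ∈ s, f i ω|m] =ᵐ[μ] fun ω => c * ∑ i ∈ s, g i ω := by
  have hsmul : (fun ω => c * ∑ i ∈ s, f i ω) = c • ∑ i ∈ s, f i := by
    funext ω
    simp only [Pi.smul_apply, Finset.sum_apply, smul_eq_mul]
  have hall : ∀ᵐ ω ∂μ, ∀ i ∈ s, μ[f i|m] ω = g i ω :=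
    (ae_ball_iff s.countable_toSet).mpr hfg
  rw [hsmul]
  filter_upwards [condExp_smul c (∑ i ∈ s, f i) m, condExp_finsetSum hf m, hall]
    with ω hc hsum hω
  rw [hc, Pi.smul_apply, hsum, Finset.sum_apply, smul_eq_mul, Finset.sum_congr rfl hω]

lemma condExp_add_of_ae_eq {f g f' g' : Ω → ℝ} (hf : Integrable f μ) (hg : Integrable g μ)
    (hf' : μ[f|m] =ᵐ[μ] f') (hg' : μ[g|m] =ᵐ[μ] g') : μ[f + g|m] =ᵐ[μ] f' + g' :=
  (condExp_add hf hg m).trans (hf'.add hg')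

lemma condExp_sub_of_ae_eq {f g f' g' : Ω → ℝ} (hf : Integrable f μ) (hg : Integrable g μ)
    (hf' : μ[f|m] =ᵐ[μ] f') (hg' : μ[g|m] =ᵐ[μ] g') : μ[f - g|m] =ᵐ[μ] f' - g' :=
  (condExp_sub hf hg m).trans (hf'.sub hg')

lemma condExp_sub_sub_add_ae_eq_sq_sub {α : Type*} {X : α → α → Ω → ℝ} {p : α → Ω → ℝ}
    {i j : α} (hX : ∀ a b, Integrable (X a b) μ)
    (hXp : ∀ a ∈ ({i, j} : Set α), ∀ b ∈ ({i, j} : Set α), μ[X a b|m] =ᵐ[μ] p a * p b) :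
    μ[X i i - X i j - X j i + X j j|m] =ᵐ[μ] fun ω => (p i ω - p j ω) ^ 2 := by
  have hi : i ∈ ({i, j} : Set α) := Set.mem_insert i _
  have hj : j ∈ ({i, j} : Set α) := Set.mem_insert_of_mem i rfl
  refine (condExp_add_of_ae_eq (((hX i i).sub (hX i j)).sub (hX j i)) (hX j j)
    (condExp_sub_of_ae_eq ((hX i i).sub (hX i j)) (hX j i)
      (condExp_sub_of_ae_eq (hX i i) (hX i j) (hXp i hi i hi) (hXp i hi j hj)) (hXp j hj i hi))
    (hXp j hj j hj)).trans (Filter.Eventually.of_forall fun ω => ?_)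
  simp only [Pi.add_apply, Pi.sub_apply, Pi.mul_apply]
  ring

lemma integrable_mul_of_zero_or_one [IsFiniteMeasure μ] {f g : Ω → ℝ} (hf : Measurable f)
    (hg : Measurable g) (hf01 : ∀ ω, f ω = 0 ∨ f ω = 1) (hg01 : ∀ ω, g ω = 0 ∨ g ω = 1) :
    Integrable (fun ω => f ω * g ω) μ :=
  .of_bound (hf.mul hg).aestronglyMeasurable 1 <| .of_forall fun ω => by
    rcases hf01 ω with h | h <;> rcases hg01 ω with h' | h' <;> simp [h, h']

lemma CondIndepFun.condExp_mul_of_zero_or_one [StandardBorelSpace Ω] [IsFiniteMeasure μ]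
    {hm : m ≤ mΩ} {f g : Ω → ℝ} (hfg : CondIndepFun m hm f g μ) (hf : Measurable f)
    (hg : Measurable g) (hf01 : ∀ ω, f ω = 0 ∨ f ω = 1) (hg01 : ∀ ω, g ω = 0 ∨ g ω = 1) :
    μ[fun ω => f ω * g ω|m] =ᵐ[μ] μ[f|m] * μ[g|m] := by
  have indicator_of_zero_or_one {h : Ω → ℝ} (h01 : ∀ ω, h ω = 0 ∨ h ω = 1) :
      h = (h ⁻¹' {1}).indicator fun _ => 1 := by
    funext ω
    rcases h01 ω with hω | hω <;> simp [hω]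
  calc μ[fun ω => f ω * g ω|m] = μ⟦f ⁻¹' {1} ∩ g ⁻¹' {1}|m⟧ := by
        congr 1
        funext ω
        rcases hf01 ω with h | h <;> rcases hg01 ω with h' | h' <;> simp [h, h']
    _ =ᵐ[μ] fun ω => (μ⟦f ⁻¹' {1}|m⟧) ω * (μ⟦g ⁻¹' {1}|m⟧) ω :=
        (condIndepFun_iff_condExp_inter_preimage_eq_mul hf hg).mp hfg _ _
          (measurableSet_singleton 1) (measurableSet_singleton 1)
    _ = μ[f|m] * μ[g|m] := by
        rw [← indicator_of_zero_or_one hf01, ← indicator_of_zero_or_one hg01]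
        rfl

lemma IndepFun.condExp_comp_prodMk_ae_eq_integral [IsFiniteMeasure μ]
    {α β : Type*} [mα : MeasurableSpace α] [MeasurableSpace β] [StandardBorelSpace β] [Nonempty β]
    {X : Ω → α} {Y : Ω → β} (hXY : IndepFun X Y μ) (hX : Measurable X) (hY : Measurable Y)
    {f : α × β → ℝ} (hf : StronglyMeasurable f) (hf_int : Integrable (fun ω => f (X ω, Y ω)) μ) :
    μ[fun ω => f (X ω, Y ω)|mα.comap X] =ᵐ[μ] fun ω => ∫ y, f (X ω, y) ∂(μ.map Y) := by
  have hlaw : μ.map (fun ω => (X ω, Y ω)) = μ.map X ⊗ₘ Kernel.const α (μ.map Y) := by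
    rw [Measure.compProd_const,
      (indepFun_iff_map_prod_eq_prod_map_map hX.aemeasurable hY.aemeasurable).mp hXY]
  have hcond := condDistrib_ae_eq_of_measure_eq_compProd X hY.aemeasurable hlaw
  filter_upwards [condExp_prod_ae_eq_integral_condDistrib hX hY.aemeasurable hf hf_int,
    ae_of_ae_map hX.aemeasurable hcond] with ω hω hω'
  rw [hω, hω', Kernel.const_apply]

end CondExp

def graphonSqDiff (w : ℝ → ℝ → ℝ) (x x' y : ℝ) : ℝ :=
  (w x y - w x' y) ^ 2 + (w y x - w y x') ^ 2

section Graphon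

variable {w : ℝ → ℝ → ℝ}

lemma sq_sub_le_one_of_mem_Icc {a b : ℝ} (ha : a ∈ Set.Icc (0:ℝ) 1) (hb : b ∈ Set.Icc (0:ℝ) 1) :
    (a - b) ^ 2 ≤ 1 := by
  nlinarith [ha.1, ha.2, hb.1, hb.2]

lemma measurable_graphonSqDiff (hw : Measurable fun p : ℝ × ℝ => w p.1 p.2) :
    Measurable fun p : (ℝ × ℝ) × ℝ => graphonSqDiff w p.1.1 p.1.2 p.2 := by
  have hw' {f g : (ℝ × ℝ) × ℝ → ℝ} (hf : Measurable f) (hg : Measurable g) :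
      Measurable fun p => w (f p) (g p) := hw.comp (hf.prodMk hg)
  unfold graphonSqDiff
  fun_prop (disch := assumption)

lemma norm_graphonSqDiff_le (hw01 : ∀ x y, w x y ∈ Set.Icc (0:ℝ) 1) (x x' y : ℝ) :
    ‖graphonSqDiff w x x' y‖ ≤ 2 := by
  unfold graphonSqDiff
  rw [Real.norm_of_nonneg (by positivity)]
  linarith [sq_sub_le_one_of_mem_Icc (hw01 x y) (hw01 x' y),
    sq_sub_le_one_of_mem_Icc (hw01 y x) (hw01 y x')]

lemma setIntegral_Icc_graphonSqDiff (hw : Measurable fun p : ℝ × ℝ => w p.1 p.2)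
    (hw01 : ∀ x y, w x y ∈ Set.Icc (0:ℝ) 1) (x x' : ℝ) :
    ∫ y in Set.Icc 0 1, graphonSqDiff w x x' y = 2 * graphonDist w x x' := by
  have hint {f : ℝ → ℝ} (hf : Measurable f) (hf1 : ∀ y, |f y| ≤ 1) :
      IntegrableOn f (Set.Icc 0 1) :=
    .of_bound measure_Icc_lt_top hf.aestronglyMeasurable 1 (.of_forall hf1)
  have hrow : IntegrableOn (fun y => (w x y - w x' y) ^ 2) (Set.Icc 0 1) :=
    hint (by fun_prop) fun y => by
      rw [abs_of_nonneg (sq_nonneg _)]; exact sq_sub_le_one_of_mem_Icc (hw01 x y) (hw01 x' y)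
  have hcol : IntegrableOn (fun y => (w y x - w y x') ^ 2) (Set.Icc 0 1) :=
    hint (by fun_prop) fun y => by
      rw [abs_of_nonneg (sq_nonneg _)]; exact sq_sub_le_one_of_mem_Icc (hw01 y x) (hw01 y x')
  rw [graphonDist, intervalIntegral.integral_of_le zero_le_one,
    intervalIntegral.integral_of_le zero_le_one, ← integral_Icc_eq_integral_Ioc,
    ← integral_Icc_eq_integral_Ioc]
  unfold graphonSqDiff
  rw [integral_add hrow hcol]
  ring

end Graphon

section Estimator

variable {Ω : Type*} {m mΩ : MeasurableSpace Ω} {μ : Measure Ω} {n T : ℕ}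
  {G : ℕ → Fin n → Fin n → Ω → ℝ} {w : ℝ → ℝ → ℝ} {u : Fin n → Ω → ℝ}

lemma rhat_eq_sum (T : ℕ) (G : ℕ → Fin n → Fin n → Ω → ℝ) (a b k : Fin n) :
    rhat T G a b k = fun ω => 1 / (T : ℝ) ^ 2 *
      ∑ p ∈ range T ×ˢ Ico T (2 * T), G p.1 a k ω * G p.2 b k ω := by
  funext ω
  simp only [rhat, mul_assoc, sum_mul_sum, sum_product]

lemma integrable_rhat [IsFiniteMeasure μ] (hG : ∀ t a b, Measurable (G t a b))
    (hG01 : ∀ t a b ω, G t a b ω = 0 ∨ G t a b ω = 1) (a b k : Fin n) :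
    Integrable (rhat T G a b k) μ := by
  rw [rhat_eq_sum]
  exact (integrable_finsetSum _ fun p _ => integrable_mul_of_zero_or_one (hG _ _ _) (hG _ _ _)
    (hG01 _ _ _) (hG01 _ _ _)).const_mul _

lemma condExp_rhat [IsFiniteMeasure μ] (hT : T ≠ 0) (hG : ∀ t a b, Measurable (G t a b))
    (hG01 : ∀ t a b ω, G t a b ω = 0 ∨ G t a b ω = 1) {a b k : Fin n} {c : Ω → ℝ}
    (hc : ∀ t₁ t₂, t₁ < T → T ≤ t₂ → t₂ < 2 * T →
      μ[fun ω => G t₁ a k ω * G t₂ b k ω|m] =ᵐ[μ] c) :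
    μ[rhat T G a b k|m] =ᵐ[μ] c := by
  have hcard : (range T ×ˢ Ico T (2 * T)).card = T * T := by
    rw [card_product, card_range, Nat.card_Ico, two_mul, Nat.add_sub_cancel]
  rw [rhat_eq_sum]
  refine (condExp_const_mul_sum_ae_eq (g := fun _ => c) _
    (fun p _ => integrable_mul_of_zero_or_one (hG _ _ _) (hG _ _ _) (hG01 _ _ _) (hG01 _ _ _))
    fun p hp => ?_).trans (.of_forall fun ω => ?_)
  · simp only [mem_product, mem_range, mem_Ico] at hp
    exact hc p.1 p.2 hp.1 hp.2.1 hp.2.2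
  · dsimp only
    rw [sum_const, hcard, nsmul_eq_mul]
    push_cast
    field_simp

-- `ĉ` is `r̂` for the transposed graphs.
lemma integrable_chat [IsFiniteMeasure μ] (hG : ∀ t a b, Measurable (G t a b))
    (hG01 : ∀ t a b ω, G t a b ω = 0 ∨ G t a b ω = 1) (a b k : Fin n) :
    Integrable (chat T G a b k) μ :=
  integrable_rhat (G := fun t a b => G t b a) (fun _ _ _ => hG _ _ _) (fun _ _ _ => hG01 _ _ _)
    a b k

lemma condExp_chat [IsFiniteMeasure μ] (hT : T ≠ 0) (hG : ∀ t a b, Measurable (G t a b))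
    (hG01 : ∀ t a b ω, G t a b ω = 0 ∨ G t a b ω = 1) {a b k : Fin n} {c : Ω → ℝ}
    (hc : ∀ t₁ t₂, t₁ < T → T ≤ t₂ → t₂ < 2 * T →
      μ[fun ω => G t₁ k a ω * G t₂ k b ω|m] =ᵐ[μ] c) :
    μ[chat T G a b k|m] =ᵐ[μ] c :=
  condExp_rhat (G := fun t a b => G t b a) hT (fun _ _ _ => hG _ _ _) (fun _ _ _ => hG01 _ _ _) hc

lemma condExp_edge_mul_edge [StandardBorelSpace Ω] [IsFiniteMeasure μ] {hm : m ≤ mΩ}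
    (hG : ∀ t a b, Measurable (G t a b)) (hG01 : ∀ t a b ω, G t a b ω = 0 ∨ G t a b ω = 1)
    (hG_cond : ∀ t, t < 2 * T → ∀ a b : Fin n, a ≠ b →
      μ[G t a b|m] =ᵐ[μ] fun ω => w (u a ω) (u b ω))
    (hG_condIndep : iCondIndepFun m hm (m := fun _ => Real.measurableSpace)
      (fun q : {q : ℕ × Fin n × Fin n // q.1 < 2 * T ∧ q.2.1 ≠ q.2.2} =>
        G q.1.1 q.1.2.1 q.1.2.2) μ)
    {t₁ t₂ : ℕ} (ht : t₁ ≠ t₂) (ht₁ : t₁ < 2 * T) (ht₂ : t₂ < 2 * T) {a b c d : Fin n}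
    (hab : a ≠ b) (hcd : c ≠ d) :
    μ[fun ω => G t₁ a b ω * G t₂ c d ω|m] =ᵐ[μ]
      fun ω => w (u a ω) (u b ω) * w (u c ω) (u d ω) := by
  have hne : (⟨(t₁, a, b), ht₁, hab⟩ : {q : ℕ × Fin n × Fin n // q.1 < 2 * T ∧ q.2.1 ≠ q.2.2})
      ≠ ⟨(t₂, c, d), ht₂, hcd⟩ := fun h => ht (congrArg (fun q => q.1.1) h)
  filter_upwards [CondIndepFun.condExp_mul_of_zero_or_one (hG_condIndep.condIndepFun hne)
    (hG _ _ _) (hG _ _ _) (hG01 _ _ _) (hG01 _ _ _), hG_cond t₁ ht₁ a b hab, hG_cond t₂ ht₂ c d hcd]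
    with ω h h₁ h₂
  rw [h, Pi.mul_apply, h₁, h₂]

lemma condExp_dhat_summand [IsFiniteMeasure μ] (hT : T ≠ 0) (hG : ∀ t a b, Measurable (G t a b))
    (hG01 : ∀ t a b ω, G t a b ω = 0 ∨ G t a b ω = 1)
    (hprod : ∀ t₁ t₂, t₁ < T → T ≤ t₂ → t₂ < 2 * T → ∀ a b c d : Fin n, a ≠ b → c ≠ d →
      μ[fun ω => G t₁ a b ω * G t₂ c d ω|m] =ᵐ[μ]
        fun ω => w (u a ω) (u b ω) * w (u c ω) (u d ω))
    {i j k : Fin n} (hki : k ≠ i) (hkj : k ≠ j) :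
    μ[fun ω => (rhat T G i i k ω - rhat T G i j k ω - rhat T G j i k ω + rhat T G j j k ω) +
        (chat T G i i k ω - chat T G i j k ω - chat T G j i k ω + chat T G j j k ω)|m]
      =ᵐ[μ] fun ω => graphonSqDiff w (u i ω) (u j ω) (u k ω) := by
  have hk : ∀ a ∈ ({i, j} : Set (Fin n)), k ≠ a := by
    rintro a (rfl | rfl)
    exacts [hki, hkj]
  have hr (a b : Fin n) : Integrable (rhat T G a b k) μ := integrable_rhat hG hG01 a b k
  have hc (a b : Fin n) : Integrable (chat T G a b k) μ := integrable_chat hG hG01 a b k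
  refine condExp_add_of_ae_eq ((((hr i i).sub (hr i j)).sub (hr j i)).add (hr j j))
    ((((hc i i).sub (hc i j)).sub (hc j i)).add (hc j j)) ?_ ?_
  · exact condExp_sub_sub_add_ae_eq_sq_sub (X := fun a b => rhat T G a b k)
      (p := fun a ω => w (u a ω) (u k ω)) hr fun a ha b hb => condExp_rhat hT hG hG01
        fun t₁ t₂ h₁ h₂ h₃ => hprod t₁ t₂ h₁ h₂ h₃ a k b k (hk a ha).symm (hk b hb).symm
  · exact condExp_sub_sub_add_ae_eq_sq_sub (X := fun a b => chat T G a b k)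
      (p := fun a ω => w (u k ω) (u a ω)) hc fun a ha b hb => condExp_chat hT hG hG01
        fun t₁ t₂ h₁ h₂ h₃ => hprod t₁ t₂ h₁ h₂ h₃ k a k b (hk a ha) (hk b hb)

lemma condExp_dhat [IsFiniteMeasure μ] (hT : T ≠ 0) (hG : ∀ t a b, Measurable (G t a b))
    (hG01 : ∀ t a b ω, G t a b ω = 0 ∨ G t a b ω = 1)
    (hprod : ∀ t₁ t₂, t₁ < T → T ≤ t₂ → t₂ < 2 * T → ∀ a b c d : Fin n, a ≠ b → c ≠ d →
      μ[fun ω => G t₁ a b ω * G t₂ c d ω|m] =ᵐ[μ]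
        fun ω => w (u a ω) (u b ω) * w (u c ω) (u d ω))
    (i j : Fin n) :
    μ[dhat T G i j|m] =ᵐ[μ] fun ω => 1 / (2 * ((n : ℝ) - 2)) *
      ∑ k ∈ ({i, j}ᶜ : Finset (Fin n)), graphonSqDiff w (u i ω) (u j ω) (u k ω) := by
  have hr := integrable_rhat (μ := μ) (T := T) hG hG01
  have hc := integrable_chat (μ := μ) (T := T) hG hG01
  exact condExp_const_mul_sum_ae_eq _ (fun k _ => by fun_prop) fun k hk => by
    obtain ⟨hki, hkj⟩ : k ≠ i ∧ k ≠ j := by simpa [not_or] using hk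
    exact condExp_dhat_summand hT hG hG01 hprod hki hkj

end Estimator

section Labels

variable {Ω : Type*} {mΩ : MeasurableSpace Ω} {μ : Measure Ω} [IsProbabilityMeasure μ] {n : ℕ}
  {w : ℝ → ℝ → ℝ} {u : Fin n → Ω → ℝ}

lemma comap_prodMk_le_sigmaAlgebraOf (u : Fin n → Ω → ℝ) (i j : Fin n) :
    MeasurableSpace.comap (fun ω => (u i ω, u j ω)) inferInstance ≤ sigmaAlgebraOf u :=
  (((measurable_pi_apply i).prodMk (measurable_pi_apply j)).comp
    (comap_measurable fun ω k => u k ω)).comap_le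

lemma condExp_graphonSqDiff (hw : Measurable fun p : ℝ × ℝ => w p.1 p.2)
    (hw01 : ∀ x y, w x y ∈ Set.Icc (0:ℝ) 1) (hu : ∀ i, Measurable (u i))
    (hu_indep : iIndepFun (m := fun _ => Real.measurableSpace) u μ) {i j k : Fin n}
    (hk_unif : μ.map (u k) = volume.restrict (Set.Icc (0:ℝ) 1)) (hki : k ≠ i) (hkj : k ≠ j) :
    μ[fun ω => graphonSqDiff w (u i ω) (u j ω) (u k ω)|
        MeasurableSpace.comap (fun ω => (u i ω, u j ω)) inferInstance]
      =ᵐ[μ] fun ω => 2 * graphonDist w (u i ω) (u j ω) := by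
  have hX : Measurable fun ω => (u i ω, u j ω) := (hu i).prodMk (hu j)
  have hF := measurable_graphonSqDiff hw
  have hcond : μ[fun ω => graphonSqDiff w (u i ω) (u j ω) (u k ω)|
        MeasurableSpace.comap (fun ω => (u i ω, u j ω)) inferInstance]
      =ᵐ[μ] fun ω => ∫ y, graphonSqDiff w (u i ω) (u j ω) y ∂(μ.map (u k)) :=
    IndepFun.condExp_comp_prodMk_ae_eq_integral
      (hu_indep.indepFun_prodMk hu i j k hki.symm hkj.symm) hX (hu k) hF.stronglyMeasurable
      (.of_bound (hF.comp (hX.prodMk (hu k))).aestronglyMeasurable 2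
        (.of_forall fun _ => norm_graphonSqDiff_le hw01 _ _ _))
  filter_upwards [hcond] with ω hω
  rw [hω, hk_unif, setIntegral_Icc_graphonSqDiff hw hw01]

lemma condExp_avg_graphonSqDiff (hw : Measurable fun p : ℝ × ℝ => w p.1 p.2)
    (hw01 : ∀ x y, w x y ∈ Set.Icc (0:ℝ) 1) (hu : ∀ i, Measurable (u i))
    (hu_indep : iIndepFun (m := fun _ => Real.measurableSpace) u μ)
    (hu_unif : ∀ i, μ.map (u i) = volume.restrict (Set.Icc (0:ℝ) 1)) (hn : 3 ≤ n)
    {i j : Fin n} (hij : i ≠ j) :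
    μ[fun ω => 1 / (2 * ((n : ℝ) - 2)) *
          ∑ k ∈ ({i, j}ᶜ : Finset (Fin n)), graphonSqDiff w (u i ω) (u j ω) (u k ω)|
        MeasurableSpace.comap (fun ω => (u i ω, u j ω)) inferInstance]
      =ᵐ[μ] fun ω => graphonDist w (u i ω) (u j ω) := by
  have hS : (({i, j}ᶜ : Finset (Fin n)).card : ℝ) = n - 2 := by
    rw [card_compl, card_pair hij, Fintype.card_fin, Nat.cast_sub (by omega)]
    norm_num
  have hn2 : (n : ℝ) - 2 ≠ 0 := by
    have : (3 : ℝ) ≤ n := by exact_mod_cast hn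
    linarith
  refine (condExp_const_mul_sum_ae_eq (g := fun _ ω => 2 * graphonDist w (u i ω) (u j ω)) _
    (fun k _ => ?_) fun k hk => ?_).trans (.of_forall fun ω => ?_)
  · exact .of_bound ((measurable_graphonSqDiff hw).comp
      (((hu i).prodMk (hu j)).prodMk (hu k))).aestronglyMeasurable 2
      (.of_forall fun _ => norm_graphonSqDiff_le hw01 _ _ _)
  · obtain ⟨hki, hkj⟩ : k ≠ i ∧ k ≠ j := by simpa [not_or] using hk
    exact condExp_graphonSqDiff hw hw01 hu hu_indep (hu_unif k) hki hkj
  · dsimp only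
    rw [sum_const, nsmul_eq_mul, hS]
    field_simp

end Labels

theorem sba_dhat_unbiased
    {Ω : Type*} [m0 : MeasurableSpace Ω] [StandardBorelSpace Ω]
    (μ : Measure Ω) [IsProbabilityMeasure μ]
    (n T : ℕ) (hn : 3 ≤ n) (hT : 1 ≤ T)
    (w : ℝ → ℝ → ℝ) (hw_meas : Measurable fun p : ℝ × ℝ => w p.1 p.2)
    (hw01 : ∀ x y, w x y ∈ Set.Icc (0:ℝ) 1)
    (u : Fin n → Ω → ℝ) (hu_meas : ∀ i, Measurable (u i))
    (hu_indep : iIndepFun (m := fun _ => Real.measurableSpace) u μ)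
    (hu_unif : ∀ i, Measure.map (u i) μ = volume.restrict (Set.Icc (0:ℝ) 1))
    (G : ℕ → Fin n → Fin n → Ω → ℝ)
    (hG_meas : ∀ t i j, Measurable (G t i j))
    (hG01 : ∀ t (i j : Fin n) (ω : Ω), G t i j ω = 0 ∨ G t i j ω = 1)
    (hG_cond : ∀ t, t < 2 * T → ∀ i j : Fin n, i ≠ j →
      μ[G t i j | sigmaAlgebraOf u] =ᵐ[μ] fun ω => w (u i ω) (u j ω))
    (hG_condIndep : iCondIndepFun (sigmaAlgebraOf u)
      ((measurable_pi_iff.mpr hu_meas).comap_le)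
      (m := fun _ => Real.measurableSpace)
      (fun q : {q : ℕ × Fin n × Fin n // q.1 < 2 * T ∧ q.2.1 ≠ q.2.2} =>
        G q.1.1 q.1.2.1 q.1.2.2) μ)
    (i j : Fin n) (hij : i ≠ j) :
    (μ[dhat T G i j | MeasurableSpace.comap (fun ω => (u i ω, u j ω)) inferInstance]
        =ᵐ[μ] fun ω => graphonDist w (u i ω) (u j ω)) ∧
      ∫ ω, dhat T G i j ω ∂μ = ∫ ω, graphonDist w (u i ω) (u j ω) ∂μ := by
  have hprod : ∀ t₁ t₂, t₁ < T → T ≤ t₂ → t₂ < 2 * T → ∀ a b c d : Fin n, a ≠ b → c ≠ d →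
      μ[fun ω => G t₁ a b ω * G t₂ c d ω|sigmaAlgebraOf u] =ᵐ[μ]
        fun ω => w (u a ω) (u b ω) * w (u c ω) (u d ω) :=
    fun t₁ t₂ h₁ h₂ h₃ _ _ _ _ hab hcd =>
      condExp_edge_mul_edge hG_meas hG01 hG_cond hG_condIndep (by omega) (by omega) h₃ hab hcd
  have hm : sigmaAlgebraOf u ≤ m0 := (measurable_pi_iff.mpr hu_meas).comap_le
  have hle := ((hu_meas i).prodMk (hu_meas j)).comap_le
  have := isFiniteMeasure_trim (μ := μ) hm
  have := isFiniteMeasure_trim (μ := μ) hle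
  have hcond : μ[dhat T G i j|MeasurableSpace.comap (fun ω => (u i ω, u j ω)) inferInstance]
      =ᵐ[μ] fun ω => graphonDist w (u i ω) (u j ω) :=
    (condExp_condExp_of_le (μ := μ) (comap_prodMk_le_sigmaAlgebraOf u i j) hm).symm.trans <|
      (condExp_congr_ae (condExp_dhat (by omega) hG_meas hG01 hprod i j)).trans <|
        condExp_avg_graphonSqDiff hw_meas hw01 hu_meas hu_indep hu_unif hn hij
  exact ⟨hcond, (integral_condExp hle).symm.trans (integral_congr_ae hcond)⟩
end

section
/- In the directed model, for distinct i,j,k ∈ {1,…,n}, the random variables r̂_{ij}^k and ĉ_{ij}^k are conditionally independent given (u_1,…,u_n), and consequently Var[½(r̂_{ij}^k + ĉ_{ij}^k) | u_1,…,u_n] = ¼(Var[r̂_{ij}^k | u_1,…,u_n] + Var[ĉ_{ij}^k | u_1,…,u_n]) ≤ 1/T almost surely. -/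
open MeasureTheory ProbabilityTheory

/-- The conditional variance `Var[f | m] = E[(f − E[f|m])² | m]`. -/
noncomputable def condVar {Ω : Type*} (m : MeasurableSpace Ω) [m0 : MeasurableSpace Ω]
    (μ : MeasureTheory.Measure Ω) (f : Ω → ℝ) : Ω → ℝ :=
  μ[fun ω => (f ω - (μ[f|m]) ω) ^ 2 | m]

/-!
Conditionally on the labels, work under the regular conditional distribution `condExpKernel`:
for almost every `ω` it turns conditional independence of two real observables into ordinary
independence, and conditional variances into ordinary variances. `r̂` and `ĉ` are functions of
the disjoint edge sets into and out of `k`, so they are conditionally independent and their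
variances add. Each of them is a product `a * b` of two independent averages of `T` pairwise
independent `[0,1]`-valued edges, taken over the two halves of the time range, and
`Var (a * b) = Var a * E[b²] + (E a)² * Var b ≤ Var a + Var b ≤ 1 / (4T) + 1 / (4T)`.
-/

open Finset

namespace ProbabilityTheory

section Unconditional

variable {Ω : Type*} {mΩ : MeasurableSpace Ω} {ν : Measure Ω} [IsProbabilityMeasure ν]

lemma IndepFun.variance_mul {X Y : Ω → ℝ} (hX : MemLp X 2 ν) (hY : MemLp Y 2 ν)
    (h : IndepFun X Y ν) :
    Var[X * Y; ν] = Var[X; ν] * ν[Y ^ 2] + ν[X] ^ 2 * Var[Y; ν] := by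
  have hsq : IndepFun (fun ω => X ω ^ 2) (fun ω => Y ω ^ 2) ν :=
    h.comp (φ := fun x => x ^ 2) (ψ := fun x => x ^ 2) (by fun_prop) (by fun_prop)
  have hXY : MemLp (X * Y) 2 ν := by
    refine (memLp_two_iff_integrable_sq (hX.1.mul hY.1)).2 ?_
    simp only [Pi.mul_apply, mul_pow]
    exact hsq.integrable_mul hX.integrable_sq hY.integrable_sq
  simp only [variance_eq_sub hXY, variance_eq_sub hX, variance_eq_sub hY, Pi.pow_apply,
    Pi.mul_apply, mul_pow]
  rw [hsq.integral_fun_mul_eq_mul_integral (hX.1.pow 2) (hY.1.pow 2),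
    h.integral_fun_mul_eq_mul_integral hX.1 hY.1]
  ring

lemma IndepFun.variance_mul_le_add {X Y : Ω → ℝ} (hXm : AEStronglyMeasurable X ν)
    (hYm : AEStronglyMeasurable Y ν) (hX : ∀ᵐ ω ∂ν, |X ω| ≤ 1) (hY : ∀ᵐ ω ∂ν, |Y ω| ≤ 1)
    (h : IndepFun X Y ν) :
    Var[X * Y; ν] ≤ Var[X; ν] + Var[Y; ν] := by
  have hX2 := memLp_of_bounded (hX.mono fun ω => abs_le.1) hXm 2
  have hY2 := memLp_of_bounded (hY.mono fun ω => abs_le.1) hYm 2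
  have hEY2 : ν[Y ^ 2] ≤ 1 := by
    have := norm_integral_le_of_norm_le_const (μ := ν) (f := Y ^ 2) (C := 1)
      (hY.mono fun ω hω => by simpa [abs_pow, sq_le_one_iff_abs_le_one] using hω)
    simp only [Real.norm_eq_abs, probReal_univ, mul_one] at this
    exact (le_abs_self _).trans this
  have hEX : ν[X] ^ 2 ≤ 1 := by
    have := norm_integral_le_of_norm_le_const (μ := ν) (f := X) (C := 1)
      (by simpa only [Real.norm_eq_abs] using hX)
    simpa only [Real.norm_eq_abs, probReal_univ, mul_one, sq_le_one_iff_abs_le_one] using this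
  rw [h.variance_mul hX2 hY2]
  nlinarith [variance_nonneg X ν, variance_nonneg Y ν]

lemma variance_inv_card_mul_sum_le {ι : Type*} {X : ι → Ω → ℝ} {s : Finset ι} {a b : ℝ}
    (hXm : ∀ t ∈ s, AEMeasurable (X t) ν) (hX : ∀ t ∈ s, ∀ᵐ ω ∂ν, X t ω ∈ Set.Icc a b)
    (h : Set.Pairwise s fun t t' => IndepFun (X t) (X t') ν) :
    Var[fun ω => (#s : ℝ)⁻¹ * ∑ t ∈ s, X t ω; ν] ≤ ((b - a) / 2) ^ 2 / #s := by
  have hsum : (fun ω => ∑ t ∈ s, X t ω) = ∑ t ∈ s, X t := by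
    funext ω; rw [Finset.sum_apply]
  rw [variance_const_mul, hsum, IndepFun.variance_sum (fun t ht =>
    memLp_of_bounded (hX t ht) (hXm t ht).aestronglyMeasurable 2) h]
  calc ((#s : ℝ)⁻¹) ^ 2 * ∑ t ∈ s, Var[X t; ν]
      ≤ ((#s : ℝ)⁻¹) ^ 2 * ∑ t ∈ s, ((b - a) / 2) ^ 2 := by
        gcongr with t ht
        exact variance_le_sq_of_bounded (hX t ht) (hXm t ht)
    _ = ((b - a) / 2) ^ 2 / #s := by
        rw [Finset.sum_const, nsmul_eq_mul]
        rcases eq_or_ne (#s : ℝ) 0 with h0 | h0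
        · simp [h0]
        · field_simp

end Unconditional

section Kernel

variable {Ω : Type*} {m mΩ : MeasurableSpace Ω} [StandardBorelSpace Ω] {μ : Measure Ω}
  [IsFiniteMeasure μ]

lemma condVar_ae_eq_variance_condExpKernel (hm : m ≤ mΩ) {X : Ω → ℝ} {a b : ℝ}
    (hXm : Measurable X) (hX : ∀ ω, X ω ∈ Set.Icc a b) :
    Var[X; μ | m] =ᵐ[μ] fun ω => Var[X; condExpKernel μ m ω] := by
  have hL2 : ∀ ν : Measure Ω, [IsFiniteMeasure ν] → MemLp X 2 ν := fun ν _ =>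
    memLp_of_bounded (ae_of_all _ hX) hXm.aestronglyMeasurable 2
  filter_upwards [condVar_ae_eq_condExp_sq_sub_sq_condExp hm (hL2 μ),
    condExp_ae_eq_integral_condExpKernel (f := X ^ 2) hm (hL2 μ).integrable_sq,
    condExp_ae_eq_integral_condExpKernel hm ((hL2 μ).integrable one_le_two)] with ω hV h2 h1
  rw [hV, variance_eq_sub (hL2 _), Pi.sub_apply, Pi.pow_apply, h1, h2]

lemma CondIndepFun.ae_indepFun_condExpKernel {hm : m ≤ mΩ} {X Y : Ω → ℝ} (hX : Measurable X)
    (hY : Measurable Y) (h : CondIndepFun m hm X Y μ) :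
    ∀ᵐ ω ∂μ, IndepFun X Y (condExpKernel μ m ω) := by
  -- The rational half-lines form a countable generating π-system, so the kernel-wise product
  -- formula can be required for all of them outside a single null set.
  set π : Set (Set ℝ) := ⋃ a : ℚ, {Set.Iio (a : ℝ)}
  have hπ : π.Countable := Set.countable_iUnion fun _ => Set.countable_singleton _
  have hgen : Real.measurableSpace = MeasurableSpace.generateFrom π := by
    rw [BorelSpace.measurable_eq (α := ℝ), Real.borel_eq_generateFrom_Iio_rat]
  have hmeas : ∀ s ∈ π, MeasurableSet s := by
    simp only [π, Set.mem_iUnion, Set.mem_singleton_iff]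
    rintro s ⟨a, rfl⟩
    exact measurableSet_Iio
  have hprod : ∀ᵐ ω ∂μ, ∀ s ∈ π, ∀ t ∈ π, condExpKernel μ m ω (X ⁻¹' s ∩ Y ⁻¹' t)
      = condExpKernel μ m ω (X ⁻¹' s) * condExpKernel μ m ω (Y ⁻¹' t) := by
    refine ae_of_ae_trim hm ?_
    simp only [ae_ball_iff hπ]
    exact fun s hs t ht =>
      Kernel.IndepFun.measure_inter_preimage_eq_mul h s t (hmeas s hs) (hmeas t ht)
  filter_upwards [hprod] with ω hω
  refine IndepSets.indep hX.comap_le hY.comap_le (Real.isPiSystem_Iio_rat.comap X)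
    (Real.isPiSystem_Iio_rat.comap Y) ?_ ?_ ?_
  · rw [hgen, MeasurableSpace.comap_generateFrom]; rfl
  · rw [hgen, MeasurableSpace.comap_generateFrom]; rfl
  · rintro _ _ ⟨s, hs, rfl⟩ ⟨t, ht, rfl⟩
    exact Filter.Eventually.of_forall fun _ => hω s hs t ht

lemma CondIndepFun.condVar_add {hm : m ≤ mΩ} {X Y : Ω → ℝ} {a b c d : ℝ} (hXm : Measurable X)
    (hYm : Measurable Y) (hX : ∀ ω, X ω ∈ Set.Icc a b) (hY : ∀ ω, Y ω ∈ Set.Icc c d)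
    (h : CondIndepFun m hm X Y μ) :
    Var[X + Y; μ | m] =ᵐ[μ] Var[X; μ | m] + Var[Y; μ | m] := by
  have hXY : ∀ ω, (X + Y) ω ∈ Set.Icc (a + c) (b + d) := fun ω =>
    ⟨add_le_add (hX ω).1 (hY ω).1, add_le_add (hX ω).2 (hY ω).2⟩
  filter_upwards [condVar_ae_eq_variance_condExpKernel hm (hXm.add hYm) hXY,
    condVar_ae_eq_variance_condExpKernel hm hXm hX, condVar_ae_eq_variance_condExpKernel hm hYm hY,
    h.ae_indepFun_condExpKernel hXm hYm] with ω hV hVX hVY hind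
  rw [hV, Pi.add_apply, hVX, hVY]
  exact hind.variance_add (memLp_of_bounded (ae_of_all _ hX) hXm.aestronglyMeasurable 2)
    (memLp_of_bounded (ae_of_all _ hY) hYm.aestronglyMeasurable 2)

end Kernel

end ProbabilityTheory

lemma inv_card_mul_sum_mem_Icc {ι : Type*} {s : Finset ι} {x : ι → ℝ}
    (hx : ∀ t ∈ s, x t ∈ Set.Icc 0 1) : (#s : ℝ)⁻¹ * ∑ t ∈ s, x t ∈ Set.Icc 0 1 :=
  ⟨mul_nonneg (by positivity) (sum_nonneg fun t ht => (hx t ht).1),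
    inv_mul_le_one_of_le₀ ((sum_le_sum fun t ht => (hx t ht).2).trans (by simp)) (by positivity)⟩

lemma condVar_eq_probabilityTheory_condVar {Ω : Type*} (m : MeasurableSpace Ω)
    [MeasurableSpace Ω] (μ : Measure Ω) (f : Ω → ℝ) : condVar m μ f = Var[f; μ | m] := rfl

lemma card_Ico_two_mul (T : ℕ) : #(Ico T (2 * T)) = T := by simp [two_mul]

lemma rhat_eq_mul {Ω : Type*} {n : ℕ} (T : ℕ) (G : ℕ → Fin n → Fin n → Ω → ℝ) (i j k : Fin n) :
    rhat T G i j k = fun ω => ((T : ℝ)⁻¹ * ∑ t ∈ range T, G t i k ω) *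
      ((T : ℝ)⁻¹ * ∑ t ∈ Ico T (2 * T), G t j k ω) := by
  funext ω
  rw [rhat]
  ring

lemma chat_eq_rhat {Ω : Type*} {n : ℕ} (T : ℕ) (G : ℕ → Fin n → Fin n → Ω → ℝ) (i j k : Fin n) :
    chat T G i j k = rhat T (fun t a b => G t b a) i j k := rfl

lemma rhat_mem_Icc {Ω : Type*} {n : ℕ} {T : ℕ} {G : ℕ → Fin n → Fin n → Ω → ℝ}
    (hG01 : ∀ t a b ω, G t a b ω ∈ Set.Icc 0 1) (i j k : Fin n) (ω : Ω) :
    rhat T G i j k ω ∈ Set.Icc 0 1 := by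
  rw [rhat_eq_mul]
  exact unitInterval.mul_mem
    (by simpa only [card_range] using
      inv_card_mul_sum_mem_Icc (s := range T) fun t _ => hG01 t i k ω)
    (by simpa only [card_Ico_two_mul] using
      inv_card_mul_sum_mem_Icc (s := Ico T (2 * T)) fun t _ => hG01 t j k ω)

abbrev EdgeIdx (n T : ℕ) := {q : ℕ × Fin n × Fin n // q.1 < 2 * T ∧ q.2.1 ≠ q.2.2}

abbrev edgeSigma {Ω : Type*} {n : ℕ} (T : ℕ) (G : ℕ → Fin n → Fin n → Ω → ℝ)
    (P : ℕ × Fin n × Fin n → Prop) : MeasurableSpace Ω :=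
  ⨆ q ∈ {q : EdgeIdx n T | P q.1}, MeasurableSpace.comap (G q.1.1 q.1.2.1 q.1.2.2) inferInstance

namespace ProbabilityTheory

section EdgeModel

variable {Ω : Type*} {m mΩ : MeasurableSpace Ω} [StandardBorelSpace Ω] {μ : Measure Ω}
  [IsFiniteMeasure μ] {hm : m ≤ mΩ} {n T : ℕ} {G : ℕ → Fin n → Fin n → Ω → ℝ}
  {P Q : ℕ × Fin n × Fin n → Prop}

lemma measurable_edgeSigma {t : ℕ} {a b : Fin n} (ht : t < 2 * T) (hab : a ≠ b)
    (hP : P (t, a, b)) : Measurable[edgeSigma T G P] (G t a b) :=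
  Measurable.of_comap_le <| le_iSup₂
    (f := fun (q : EdgeIdx n T) (_ : q ∈ {q : EdgeIdx n T | P q.1}) =>
      MeasurableSpace.comap (G q.1.1 q.1.2.1 q.1.2.2) inferInstance) ⟨(t, a, b), ht, hab⟩ hP

lemma measurable_edgeSigma_sum {s : Finset ℕ} {a b : Fin n} (hab : a ≠ b)
    (hs : ∀ t ∈ s, t < 2 * T ∧ P (t, a, b)) :
    Measurable[edgeSigma T G P] fun ω => ∑ t ∈ s, G t a b ω :=
  Finset.measurable_fun_sum s fun t ht => measurable_edgeSigma (hs t ht).1 hab (hs t ht).2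

lemma condIndepFun_of_measurable_edgeSigma (hG_meas : ∀ t a b, Measurable (G t a b))
    (hG : iCondIndepFun m hm (fun q : EdgeIdx n T => G q.1.1 q.1.2.1 q.1.2.2) μ)
    (hPQ : ∀ q : EdgeIdx n T, P q.1 → ¬ Q q.1) {X Y : Ω → ℝ}
    (hX : Measurable[edgeSigma T G P] X) (hY : Measurable[edgeSigma T G Q] Y) :
    CondIndepFun m hm X Y μ := by
  rw [condIndepFun_iff_condIndep]
  refine condIndep_of_condIndep_of_le_left
    (condIndep_of_condIndep_of_le_right ?_ hY.comap_le) hX.comap_le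
  exact condIndep_iSup_of_disjoint (fun q => (hG_meas _ _ _).comap_le)
    ((iCondIndepFun_iff_iCondIndep m hm _ _ μ).1 hG)
    (Set.disjoint_left.2 fun q hP hQ => hPQ q hP hQ)

lemma ae_pairwise_indepFun_edge (hG_meas : ∀ t a b, Measurable (G t a b))
    (hG : iCondIndepFun m hm (fun q : EdgeIdx n T => G q.1.1 q.1.2.1 q.1.2.2) μ)
    {a b : Fin n} (hab : a ≠ b) :
    ∀ᵐ ω ∂μ, ∀ t < 2 * T, ∀ s < 2 * T, t ≠ s →
      IndepFun (G t a b) (G s a b) (condExpKernel μ m ω) := by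
  simp only [ae_all_iff, Filter.eventually_imp_distrib_left]
  intro t ht s hs hts
  refine (condIndepFun_of_measurable_edgeSigma (P := fun e => e.1 = t) (Q := fun e => e.1 = s)
    hG_meas hG (fun q hq hq' => hts (hq.symm.trans hq')) (measurable_edgeSigma ht hab rfl)
    (measurable_edgeSigma hs hab rfl)).ae_indepFun_condExpKernel (hG_meas t a b) (hG_meas s a b)

lemma ae_variance_mul_edgeAverages_le (hG_meas : ∀ t a b, Measurable (G t a b))
    (hG01 : ∀ t a b ω, G t a b ω ∈ Set.Icc 0 1)
    (hG : iCondIndepFun m hm (fun q : EdgeIdx n T => G q.1.1 q.1.2.1 q.1.2.2) μ)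
    {a b c d : Fin n} (hab : a ≠ b) (hcd : c ≠ d) :
    ∀ᵐ ω ∂μ, Var[fun x => ((T : ℝ)⁻¹ * ∑ t ∈ range T, G t a b x) *
      ((T : ℝ)⁻¹ * ∑ t ∈ Ico T (2 * T), G t c d x); condExpKernel μ m ω] ≤ 1 / (2 * T) := by
  have hAm : Measurable[edgeSigma T G fun e => e.1 < T]
      fun x => (T : ℝ)⁻¹ * ∑ t ∈ range T, G t a b x := by
    refine (measurable_edgeSigma_sum hab fun t ht => ?_).const_mul _
    have := mem_range.1 ht
    exact ⟨by omega, this⟩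
  have hBm : Measurable[edgeSigma T G fun e => T ≤ e.1]
      fun x => (T : ℝ)⁻¹ * ∑ t ∈ Ico T (2 * T), G t c d x := by
    refine (measurable_edgeSigma_sum hcd fun t ht => ?_).const_mul _
    have := mem_Ico.1 ht
    exact ⟨this.2, this.1⟩
  have hAB := condIndepFun_of_measurable_edgeSigma (P := fun e => e.1 < T)
    (Q := fun e => T ≤ e.1) hG_meas hG (fun q h h' => (not_le.2 h) h') hAm hBm
  have hA01 : ∀ x, (T : ℝ)⁻¹ * ∑ t ∈ range T, G t a b x ∈ Set.Icc 0 1 := fun x => by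
    simpa only [card_range] using inv_card_mul_sum_mem_Icc (s := range T) fun t _ => hG01 t a b x
  have hB01 : ∀ x, (T : ℝ)⁻¹ * ∑ t ∈ Ico T (2 * T), G t c d x ∈ Set.Icc 0 1 := fun x => by
    simpa only [card_Ico_two_mul] using
      inv_card_mul_sum_mem_Icc (s := Ico T (2 * T)) fun t _ => hG01 t c d x
  filter_upwards [ae_pairwise_indepFun_edge hG_meas hG hab,
    ae_pairwise_indepFun_edge hG_meas hG hcd,
    hAB.ae_indepFun_condExpKernel (by fun_prop) (by fun_prop)] with ω hpab hpcd hind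
  have hA := variance_inv_card_mul_sum_le (ν := condExpKernel μ m ω) (s := range T)
    (X := fun t => G t a b) (fun t _ => (hG_meas t a b).aemeasurable)
    (fun t _ => ae_of_all _ (hG01 t a b))
    (fun t ht s hs hts => hpab t (by simp at ht; omega) s (by simp at hs; omega) hts)
  have hB := variance_inv_card_mul_sum_le (ν := condExpKernel μ m ω) (s := Ico T (2 * T))
    (X := fun t => G t c d) (fun t _ => (hG_meas t c d).aemeasurable)
    (fun t _ => ae_of_all _ (hG01 t c d))
    (fun t ht s hs hts => hpcd t (by simp at ht; omega) s (by simp at hs; omega) hts)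
  rw [card_range] at hA
  rw [card_Ico_two_mul] at hB
  calc _ ≤ _ := hind.variance_mul_le_add (by fun_prop) (by fun_prop)
        (ae_of_all _ fun x => abs_le.2 ⟨by linarith [(hA01 x).1], (hA01 x).2⟩)
        (ae_of_all _ fun x => abs_le.2 ⟨by linarith [(hB01 x).1], (hB01 x).2⟩)
    _ ≤ ((1 - 0) / 2) ^ 2 / T + ((1 - 0) / 2) ^ 2 / T := add_le_add hA hB
    _ = 1 / (2 * T) := by ring

lemma condIndepFun_rhat_chat (hG_meas : ∀ t a b, Measurable (G t a b))
    (hG : iCondIndepFun m hm (fun q : EdgeIdx n T => G q.1.1 q.1.2.1 q.1.2.2) μ)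
    {i j k : Fin n} (hik : i ≠ k) (hjk : j ≠ k) :
    CondIndepFun m hm (rhat T G i j k) (chat T G i j k) μ := by
  have h₁ : ∀ t ∈ range T, t < 2 * T := fun t ht => by simp at ht; omega
  have h₂ : ∀ t ∈ Ico T (2 * T), t < 2 * T := fun t ht => (mem_Ico.1 ht).2
  refine condIndepFun_of_measurable_edgeSigma (P := fun e => e.2.2 = k) (Q := fun e => e.2.1 = k)
    hG_meas hG (fun q hin hout => q.2.2 (hout.trans hin.symm)) ?_ ?_
  · exact (measurable_const.mul (measurable_edgeSigma_sum hik fun t ht => ⟨h₁ t ht, rfl⟩)).mul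
      (measurable_edgeSigma_sum hjk fun t ht => ⟨h₂ t ht, rfl⟩)
  · exact
      (measurable_const.mul (measurable_edgeSigma_sum hik.symm fun t ht => ⟨h₁ t ht, rfl⟩)).mul
      (measurable_edgeSigma_sum hjk.symm fun t ht => ⟨h₂ t ht, rfl⟩)

end EdgeModel

end ProbabilityTheory

theorem sba_rhat_chat_condIndep_condVar_general
    {Ω : Type*} [m0 : MeasurableSpace Ω] [StandardBorelSpace Ω]
    (μ : Measure Ω) [IsProbabilityMeasure μ]
    (n T : ℕ)
    (u : Fin n → Ω → ℝ) (hu_meas : ∀ i, Measurable (u i))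
    (G : ℕ → Fin n → Fin n → Ω → ℝ)
    (hG_meas : ∀ t i j, Measurable (G t i j))
    (hG01 : ∀ t (i j : Fin n) (ω : Ω), G t i j ω = 0 ∨ G t i j ω = 1)
    (hG_condIndep : iCondIndepFun (sigmaAlgebraOf u)
      ((measurable_pi_iff.mpr hu_meas).comap_le)
      (fun q : {q : ℕ × Fin n × Fin n // q.1 < 2 * T ∧ q.2.1 ≠ q.2.2} =>
        G q.1.1 q.1.2.1 q.1.2.2) μ)
    (i j k : Fin n) (hik : i ≠ k) (hjk : j ≠ k) :
    CondIndepFun (sigmaAlgebraOf u) ((measurable_pi_iff.mpr hu_meas).comap_le)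
        (rhat T G i j k) (chat T G i j k) μ ∧
      (condVar (sigmaAlgebraOf u) μ
            (fun ω => (1 / 2) * (rhat T G i j k ω + chat T G i j k ω))
          =ᵐ[μ] fun ω => (1 / 4) * (condVar (sigmaAlgebraOf u) μ (rhat T G i j k) ω
            + condVar (sigmaAlgebraOf u) μ (chat T G i j k) ω)) ∧
      (∀ᵐ ω ∂μ, condVar (sigmaAlgebraOf u) μ
          (fun ω' => (1 / 2) * (rhat T G i j k ω' + chat T G i j k ω')) ω ≤ 1 / (T : ℝ)) := by
  have hm : sigmaAlgebraOf u ≤ m0 := (measurable_pi_iff.mpr hu_meas).comap_le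
  have hG_Icc : ∀ t a b ω, G t a b ω ∈ Set.Icc (0 : ℝ) 1 := fun t a b ω => by
    rcases hG01 t a b ω with h | h <;> simp [h]
  have hrm : Measurable (rhat T G i j k) := by rw [rhat_eq_mul]; fun_prop
  have hcm : Measurable (chat T G i j k) := by rw [chat_eq_rhat, rhat_eq_mul]; fun_prop
  have hc01 : ∀ ω, chat T G i j k ω ∈ Set.Icc 0 1 := by
    rw [chat_eq_rhat]; exact rhat_mem_Icc (fun t a b => hG_Icc t b a) i j k
  have hrc := condIndepFun_rhat_chat hG_meas hG_condIndep hik hjk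
  simp only [condVar_eq_probabilityTheory_condVar]
  have hhalf : Var[fun ω => 1 / 2 * (rhat T G i j k ω + chat T G i j k ω); μ | sigmaAlgebraOf u]
      =ᵐ[μ] fun ω => 1 / 4 * (Var[rhat T G i j k; μ | sigmaAlgebraOf u] ω
        + Var[chat T G i j k; μ | sigmaAlgebraOf u] ω) := by
    filter_upwards [condVar_smul (μ := μ) (m := sigmaAlgebraOf u) (1 / 2 : ℝ)
      (rhat T G i j k + chat T G i j k),
      hrc.condVar_add hrm hcm (rhat_mem_Icc hG_Icc i j k) hc01] with ω h1 h2
    rw [Pi.smul_apply, h2, Pi.add_apply, smul_eq_mul] at h1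
    exact h1.trans (by ring)
  refine ⟨hrc, hhalf, ?_⟩
  filter_upwards [hhalf, condVar_ae_eq_variance_condExpKernel hm hrm (rhat_mem_Icc hG_Icc i j k),
    condVar_ae_eq_variance_condExpKernel hm hcm hc01,
    ae_variance_mul_edgeAverages_le hG_meas hG_Icc hG_condIndep hik hjk,
    ae_variance_mul_edgeAverages_le hG_meas hG_Icc hG_condIndep hik.symm hjk.symm]
    with ω hω hr hc hVr hVc
  rw [hω, hr, hc, chat_eq_rhat, rhat_eq_mul, rhat_eq_mul]
  calc _ ≤ 1 / 4 * (1 / (2 * T) + 1 / (2 * T) : ℝ) := by gcongr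
    _ = 1 / T / 4 := by ring
    _ ≤ 1 / T := div_le_self (by positivity) (by norm_num)

theorem sba_rhat_chat_condIndep_condVar
    {Ω : Type*} [m0 : MeasurableSpace Ω] [StandardBorelSpace Ω]
    (μ : Measure Ω) [IsProbabilityMeasure μ]
    (n T : ℕ) (hn : 3 ≤ n) (hT : 1 ≤ T)
    (w : ℝ → ℝ → ℝ) (hw_meas : Measurable fun p : ℝ × ℝ => w p.1 p.2)
    (hw01 : ∀ x y, w x y ∈ Set.Icc (0:ℝ) 1)
    (u : Fin n → Ω → ℝ) (hu_meas : ∀ i, Measurable (u i))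
    (hu_indep : iIndepFun u μ)
    (hu_unif : ∀ i, Measure.map (u i) μ = volume.restrict (Set.Icc (0:ℝ) 1))
    (G : ℕ → Fin n → Fin n → Ω → ℝ)
    (hG_meas : ∀ t i j, Measurable (G t i j))
    (hG01 : ∀ t (i j : Fin n) (ω : Ω), G t i j ω = 0 ∨ G t i j ω = 1)
    (hG_cond : ∀ t, t < 2 * T → ∀ i j : Fin n, i ≠ j →
      μ[G t i j | sigmaAlgebraOf u] =ᵐ[μ] fun ω => w (u i ω) (u j ω))
    (hG_condIndep : iCondIndepFun (sigmaAlgebraOf u)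
      ((measurable_pi_iff.mpr hu_meas).comap_le)
      (fun q : {q : ℕ × Fin n × Fin n // q.1 < 2 * T ∧ q.2.1 ≠ q.2.2} =>
        G q.1.1 q.1.2.1 q.1.2.2) μ)
    (i j k : Fin n) (hij : i ≠ j) (hik : i ≠ k) (hjk : j ≠ k) :
    CondIndepFun (sigmaAlgebraOf u) ((measurable_pi_iff.mpr hu_meas).comap_le)
        (rhat T G i j k) (chat T G i j k) μ ∧
      (condVar (sigmaAlgebraOf u) μ
            (fun ω => (1 / 2) * (rhat T G i j k ω + chat T G i j k ω))
          =ᵐ[μ] fun ω => (1 / 4) * (condVar (sigmaAlgebraOf u) μ (rhat T G i j k) ω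
            + condVar (sigmaAlgebraOf u) μ (chat T G i j k) ω)) ∧
      (∀ᵐ ω ∂μ, condVar (sigmaAlgebraOf u) μ
          (fun ω' => (1 / 2) * (rhat T G i j k ω' + chat T G i j k ω')) ω ≤ 1 / (T : ℝ)) :=
  sba_rhat_chat_condIndep_condVar_general (m0 := m0) μ n T u hu_meas G hG_meas hG01 hG_condIndep i j
    k hik hjk
end

section
/- Let w be a piecewise Lipschitz graphon with constant L > 0, Lipschitz intervals I_1,…,I_Q, and δ = min_k |α_k − α_{k−1}| the width of the smallest Lipschitz interval. Fix u_i, u_j ∈ [0,1] and set f(x) = (w(x,u_i) − w(x,u_j))². If 0 < ε < 2δL and ∫₀¹ f(x) dx ≤ ε²/(8L), then sup_{x∈[0,1]} f(x) ≤ ε. -/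
open MeasureTheory

/-- `w` is piecewise Lipschitz with constant `L` and `Q` blocks, with breakpoints
`0 = α 0 < α 1 < … < α Q = 1` and intervals `I_k = [α (k-1), α k]`. -/
def PiecewiseLipschitz (w : ℝ → ℝ → ℝ) (L : ℝ) (Q : ℕ) (α : ℕ → ℝ) : Prop :=
  α 0 = 0 ∧ α Q = 1 ∧ (∀ k < Q, α k < α (k + 1)) ∧
    ∀ i < Q, ∀ j < Q, ∀ x₁ ∈ Set.Icc (α i) (α (i + 1)), ∀ x₂ ∈ Set.Icc (α i) (α (i + 1)),
      ∀ y₁ ∈ Set.Icc (α j) (α (j + 1)), ∀ y₂ ∈ Set.Icc (α j) (α (j + 1)),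
        |w x₁ y₁ - w x₂ y₂| ≤ L * (|x₁ - x₂| + |y₁ - y₂|)

/-!
On the block `[α i, α (i+1)]` containing `x₀`, the function `f = (w(·,uᵢ) − w(·,uⱼ))²` is
`4L`-Lipschitz, because `w(·,uᵢ) − w(·,uⱼ)` is `2L`-Lipschitz with values in `[-1,1]`. Since
`ε < 2δL`, an interval of length `m = ε/(4L)` with endpoint `x₀` fits in the block, and on it the
graph of `f` lies above a triangle of area `m (f x₀ − ε/2)`. Hence
`m (f x₀ − ε/2) ≤ ∫₀¹ f ≤ ε²/(8L) = m ε/2`, i.e. `f x₀ ≤ ε`.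
-/

open Set

lemma monotoneOn_Iic_of_lt_succ {β : Type*} [Preorder β] {α : ℕ → β} {Q : ℕ}
    (h : ∀ k < Q, α k < α (k + 1)) : MonotoneOn α (Iic Q) :=
  monotoneOn_of_le_succ ordConnected_Iic fun k _ _ hk => (h k (Nat.succ_le_iff.1 hk)).le

lemma exists_mem_Icc_succ_of_mem_Icc {β : Type*} [LinearOrder β] {α : ℕ → β} {x : β} :
    ∀ {n : ℕ}, 0 < n → x ∈ Icc (α 0) (α n) → ∃ i < n, x ∈ Icc (α i) (α (i + 1))
  | 0, hn, _ => absurd hn (lt_irrefl 0)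
  | p + 1, _, hx => by
    by_cases hp : α p ≤ x
    · exact ⟨p, p.lt_succ_self, hp, hx.2⟩
    · have hp0 : 0 < p := Nat.pos_of_ne_zero fun h => hp (h ▸ hx.1)
      obtain ⟨i, hi, hxi⟩ := exists_mem_Icc_succ_of_mem_Icc hp0 ⟨hx.1, (not_le.1 hp).le⟩
      exact ⟨i, hi.trans p.lt_succ_self, hxi⟩

lemma abs_sq_sub_sq_sub_le {p q p' q' : ℝ} (hp : p ∈ Icc (0 : ℝ) 1) (hq : q ∈ Icc (0 : ℝ) 1)
    (hp' : p' ∈ Icc (0 : ℝ) 1) (hq' : q' ∈ Icc (0 : ℝ) 1) :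
    |(p - q) ^ 2 - (p' - q') ^ 2| ≤ 2 * (|p - p'| + |q - q'|) := by
  have hsum : |(p - q) + (p' - q')| ≤ 2 := by
    rw [abs_le]; constructor <;> linarith [hp.1, hp.2, hq.1, hq.2, hp'.1, hp'.2, hq'.1, hq'.2]
  have hdiff : |(p - q) - (p' - q')| ≤ |p - p'| + |q - q'| := by
    rw [show (p - q) - (p' - q') = (p - p') - (q - q') by ring]
    exact abs_sub _ _
  calc |(p - q) ^ 2 - (p' - q') ^ 2| = |(p - q) + (p' - q')| * |(p - q) - (p' - q')| := by
        rw [sq_sub_sq, abs_mul]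
    _ ≤ 2 * (|p - p'| + |q - q'|) := mul_le_mul hsum hdiff (abs_nonneg _) zero_le_two

namespace PiecewiseLipschitz

variable {w : ℝ → ℝ → ℝ} {L : ℝ} {Q : ℕ} {α : ℕ → ℝ}

lemma exists_mem_block (h : PiecewiseLipschitz w L Q α) {x : ℝ} (hx : x ∈ Icc 0 1) :
    ∃ i < Q, x ∈ Icc (α i) (α (i + 1)) := by
  obtain ⟨h0, h1, -, -⟩ := h
  have hQ : 0 < Q := Nat.pos_of_ne_zero fun hQ => by simp [hQ, h0] at h1
  exact exists_mem_Icc_succ_of_mem_Icc hQ (h0 ▸ h1 ▸ hx)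

lemma breakpoint_mem_Icc (h : PiecewiseLipschitz w L Q α) {i : ℕ} (hi : i ≤ Q) :
    α i ∈ Icc 0 1 := by
  obtain ⟨h0, h1, hsucc, -⟩ := h
  have hmono := monotoneOn_Iic_of_lt_succ hsucc
  exact ⟨h0 ▸ hmono (mem_Iic.2 (Nat.zero_le Q)) (mem_Iic.2 hi) (Nat.zero_le i),
    h1 ▸ hmono (mem_Iic.2 hi) (mem_Iic.2 le_rfl) hi⟩

lemma abs_sub_le_of_mem_block (h : PiecewiseLipschitz w L Q α) {i : ℕ} (hi : i < Q)
    {x x' : ℝ} (hx : x ∈ Icc (α i) (α (i + 1))) (hx' : x' ∈ Icc (α i) (α (i + 1)))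
    {u : ℝ} (hu : u ∈ Icc 0 1) : |w x u - w x' u| ≤ L * |x - x'| := by
  obtain ⟨j, hj, hu⟩ := h.exists_mem_block hu
  simpa using h.2.2.2 i hi j hj x hx x' hx' u hu u hu

lemma abs_sq_sub_slice_sub_le (hw01 : ∀ x y, w x y ∈ Icc (0 : ℝ) 1)
    (h : PiecewiseLipschitz w L Q α) {i : ℕ} (hi : i < Q) {x x' : ℝ}
    (hx : x ∈ Icc (α i) (α (i + 1))) (hx' : x' ∈ Icc (α i) (α (i + 1))) {u v : ℝ}
    (hu : u ∈ Icc 0 1) (hv : v ∈ Icc 0 1) :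
    |(w x u - w x v) ^ 2 - (w x' u - w x' v) ^ 2| ≤ 4 * L * |x - x'| := by
  have := abs_sq_sub_sq_sub_le (hw01 x u) (hw01 x v) (hw01 x' u) (hw01 x' v)
  linarith [h.abs_sub_le_of_mem_block hi hx hx' hu, h.abs_sub_le_of_mem_block hi hx hx' hv]

end PiecewiseLipschitz

lemma integral_sub_mul (y K m : ℝ) : ∫ x in (0 : ℝ)..m, (y - K * x) = m * (y - K * m / 2) := by
  rw [intervalIntegral.integral_sub intervalIntegrable_const
      ((continuous_const_mul K).intervalIntegrable _ _),
    intervalIntegral.integral_const_mul, integral_id, intervalIntegral.integral_const, smul_eq_mul]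
  ring

lemma integral_le_integral_of_le_on {f g : ℝ → ℝ} {a b c d : ℝ} (hac : a ≤ c) (hcd : c ≤ d)
    (hdb : d ≤ b) (hf0 : ∀ x ∈ Icc a b, 0 ≤ f x) (hf : IntervalIntegrable f volume a b)
    (hg : IntervalIntegrable g volume c d) (hgf : ∀ x ∈ Icc c d, g x ≤ f x) :
    ∫ x in c..d, g x ≤ ∫ x in a..b, f x :=
  (intervalIntegral.integral_mono_on hcd hg
      (hf.mono_set (uIcc_subset_uIcc (mem_uIcc_of_le hac (hcd.trans hdb))
        (mem_uIcc_of_le (hac.trans hcd) hdb))) hgf).trans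
    (intervalIntegral.integral_mono_interval hac hcd hdb
      (ae_restrict_of_forall_mem measurableSet_Ioc fun x hx => hf0 x (Ioc_subset_Icc_self hx)) hf)

lemma mul_sub_le_integral_of_sub_mul_abs_le {f : ℝ → ℝ} {a b c d x₀ y K m : ℝ} (hac : a ≤ c)
    (hdb : d ≤ b) (hf0 : ∀ x ∈ Icc a b, 0 ≤ f x) (hf : IntervalIntegrable f volume a b)
    (hx₀ : x₀ ∈ Icc c d) (hm0 : 0 ≤ m) (hm : 2 * m ≤ d - c)
    (hlow : ∀ t ∈ Icc c d, y - K * |t - x₀| ≤ f t) :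
    m * (y - K * m / 2) ≤ ∫ x in a..b, f x := by
  rcases le_total x₀ ((c + d) / 2) with hleft | hright
  · calc m * (y - K * m / 2) = ∫ t in x₀..x₀ + m, (y - K * (t - x₀)) := by
          rw [intervalIntegral.integral_comp_sub_right (fun s => y - K * s), sub_self,
            add_sub_cancel_left, integral_sub_mul]
      _ ≤ ∫ x in a..b, f x := by
        refine integral_le_integral_of_le_on (hac.trans hx₀.1) (by linarith) (by linarith) hf0 hf
          ((by fun_prop : Continuous _).intervalIntegrable _ _) fun t ht => ?_
        have := hlow t ⟨hx₀.1.trans ht.1, by linarith [ht.2]⟩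
        rwa [abs_of_nonneg (by linarith [ht.1])] at this
  · calc m * (y - K * m / 2) = ∫ t in x₀ - m..x₀, (y - K * (x₀ - t)) := by
          rw [intervalIntegral.integral_comp_sub_left (fun s => y - K * s), sub_self,
            sub_sub_cancel, integral_sub_mul]
      _ ≤ ∫ x in a..b, f x := by
        refine integral_le_integral_of_le_on (by linarith) (by linarith) (hx₀.2.trans hdb) hf0 hf
          ((by fun_prop : Continuous _).intervalIntegrable _ _) fun t ht => ?_
        have := hlow t ⟨by linarith [ht.1], ht.2.trans hx₀.2⟩
        rwa [abs_of_nonpos (by linarith [ht.2]), neg_sub] at this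

lemma intervalIntegrable_sq_sub_slice {w : ℝ → ℝ → ℝ}
    (hw_meas : Measurable fun p : ℝ × ℝ => w p.1 p.2) (hw01 : ∀ x y, w x y ∈ Icc (0 : ℝ) 1)
    (u v a b : ℝ) : IntervalIntegrable (fun x => (w x u - w x v) ^ 2) volume a b := by
  have hslice (u : ℝ) : Measurable fun x => w x u :=
    hw_meas.comp (measurable_id.prodMk measurable_const)
  refine (intervalIntegrable_const (c := (1 : ℝ))).mono_fun'
    (((hslice u).sub (hslice v)).pow_const 2).aestronglyMeasurable (ae_of_all _ fun x => ?_)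
  have hu := hw01 x u
  have hv := hw01 x v
  simp only [Real.norm_eq_abs, abs_le]
  constructor <;> nlinarith [hu.1, hu.2, hv.1, hv.2]

theorem sup_slice_sq_le_of_integral_le
    (w : ℝ → ℝ → ℝ) (hw_meas : Measurable fun p : ℝ × ℝ => w p.1 p.2)
    (hw01 : ∀ x y, w x y ∈ Set.Icc (0:ℝ) 1)
    (L : ℝ) (hL : 0 < L) (Q : ℕ) (hQ : 0 < Q) (α : ℕ → ℝ)
    (hpl : PiecewiseLipschitz w L Q α)
    (ui uj : ℝ) (hui : ui ∈ Set.Icc (0:ℝ) 1) (huj : uj ∈ Set.Icc (0:ℝ) 1)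
    (ε : ℝ) (hε : 0 < ε)
    (hεδ : ε < 2 * ((Finset.range Q).inf' (Finset.nonempty_range_iff.mpr hQ.ne')
      fun k => α (k + 1) - α k) * L)
    (hint : (∫ x in (0:ℝ)..1, (w x ui - w x uj) ^ 2) ≤ ε ^ 2 / (8 * L)) :
    ∀ x ∈ Set.Icc (0:ℝ) 1, (w x ui - w x uj) ^ 2 ≤ ε := by
  intro x₀ hx₀
  obtain ⟨i, hi, hx₀i⟩ := hpl.exists_mem_block hx₀
  have hm : 2 * (ε / (4 * L)) ≤ α (i + 1) - α i := by
    have hδ := Finset.inf'_le (fun k => α (k + 1) - α k) (Finset.mem_range.2 hi)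
    rw [show 2 * (ε / (4 * L)) = ε / (2 * L) by ring, div_le_iff₀ (by positivity)]
    nlinarith
  have htriangle := mul_sub_le_integral_of_sub_mul_abs_le (hpl.breakpoint_mem_Icc hi.le).1
    (hpl.breakpoint_mem_Icc hi).2 (fun x _ => sq_nonneg (w x ui - w x uj))
    (intervalIntegrable_sq_sub_slice hw_meas hw01 ui uj 0 1) hx₀i (by positivity) hm
    fun t ht => sub_le_of_abs_sub_le_left (hpl.abs_sq_sub_slice_sub_le hw01 hi ht hx₀i hui huj)
  rw [mul_div_cancel₀ ε (by positivity : 4 * L ≠ 0)] at htriangle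
  have hle : ε / (4 * L) * ((w x₀ ui - w x₀ uj) ^ 2 - ε / 2) ≤ ε / (4 * L) * (ε / 2) :=
    calc _ ≤ _ := htriangle
      _ ≤ ε ^ 2 / (8 * L) := hint
      _ = ε / (4 * L) * (ε / 2) := by field_simp; ring
  linarith [le_of_mul_le_mul_left hle (by positivity)]
end

section
/- Let w be a piecewise Lipschitz graphon with constant L > 0, Lipschitz intervals I_1,…,I_Q, and δ = min_k |α_k − α_{k−1}|. For x,y ∈ [0,1] define d^c(x,y) = ∫₀¹ (w(s,x) − w(s,y))² ds and d^r(x,y) = ∫₀¹ (w(x,t) − w(y,t))² dt. Let ε > 0 satisfy 0 < (ε/2)² < 2δL and let u_{i_p}, u_{i_v}, u_{j_p}, u_{j_v} ∈ [0,1]. If d^c(u_{i_p},u_{i_v}) ≤ ε⁴/(128L), d^r(u_{i_p},u_{i_v}) ≤ ε⁴/(128L), d^c(u_{j_p},u_{j_v}) ≤ ε⁴/(128L) and d^r(u_{j_p},u_{j_v}) ≤ ε⁴/(128L), then |w(u_{i_v},u_{j_v}) − w(u_{i_p},u_{j_p})| ≤ ε. -/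
/-!
If `w(x, ·) - w(y, ·)` has value `a` at `t`, then, being `2L`-Lipschitz on the block of `t`, it
stays above `a / 2` in absolute value on an interval of length `min (a / 4L) δ` around `t`, so its
squared `L²` norm is at least `a² / 4 · min (a / 4L) δ`. For `a > ε / 2` and `ε ≤ 1` this exceeds
`ε⁴ / 128L` because `δ > ε² / 8L`. Hence a small row distance between `x` and `y` makes
`|w x t - w y t| ≤ ε / 2`, a small column distance does the same for the transposed graphon, and
the theorem follows by the triangle inequality through `w uip ujv`. (For `ε > 1` it is trivial.)
-/

open MeasureTheory

open Set

lemma exists_lt_mem_Icc_succ {β : Type*} [LinearOrder β] {α : ℕ → β} {Q : ℕ} (hQ : 0 < Q)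
    {t : β} (h0 : α 0 ≤ t) (hQt : t ≤ α Q) : ∃ j < Q, t ∈ Icc (α j) (α (j + 1)) := by
  induction Q with
  | zero => exact absurd hQ (lt_irrefl 0)
  | succ n ih =>
    by_cases hnt : α n ≤ t
    · exact ⟨n, n.lt_succ_self, hnt, hQt⟩
    · have hn : 0 < n := Nat.pos_of_ne_zero (by rintro rfl; exact hnt h0)
      obtain ⟨j, hj, htj⟩ := ih hn (not_le.mp hnt).le
      exact ⟨j, hj.trans n.lt_succ_self, htj⟩

section SquareIntegral

variable {f : ℝ → ℝ} {K c d t : ℝ}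

lemma sq_div_four_mul_min_le_integral_sq (hK : 0 ≤ K)
    (hf : ∀ s ∈ Icc c d, |f s - f t| ≤ K * |s - t|) (ht : t ∈ Icc c d)
    (hint : IntervalIntegrable (fun s => f s ^ 2) volume c d) :
    f t ^ 2 / 4 * min (|f t| / (2 * K)) (d - c) ≤ ∫ s in c..d, f s ^ 2 := by
  set a := |f t|
  set r := min (a / (2 * K)) (d - c)
  have hr : 0 ≤ r := le_min (by positivity) (by linarith [ht.1, ht.2])
  set p := max c (t - r)
  have hcp : c ≤ p := le_max_left _ _
  have hpt : p ≤ t := max_le ht.1 (by linarith)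
  have htp : t ≤ p + r := by linarith [le_max_right c (t - r)]
  have hpd : p + r ≤ d := by
    rw [show p + r = max (c + r) t by simp only [p]; rw [← max_add_add_right, sub_add_cancel]]
    exact max_le (by linarith [min_le_right (a / (2 * K)) (d - c)]) ht.2
  have hKr : K * r ≤ a / 2 := by
    calc K * r ≤ K * (a / (2 * K)) := mul_le_mul_of_nonneg_left (min_le_left _ _) hK
      _ ≤ a / 2 := by
        rcases hK.eq_or_lt with rfl | hK
        · simp only [zero_mul]
          positivity
        · exact (by field_simp : K * (a / (2 * K)) = a / 2).le
  have hlarge : ∀ s ∈ Icc p (p + r), a ^ 2 / 4 ≤ f s ^ 2 := by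
    intro s hs
    have hst : |s - t| ≤ r := abs_sub_le_iff.mpr ⟨by linarith [hs.2], by linarith [hs.1]⟩
    have hfs : |f s - f t| ≤ a / 2 :=
      (hf s ⟨hcp.trans hs.1, hs.2.trans hpd⟩).trans
        ((mul_le_mul_of_nonneg_left hst hK).trans hKr)
    have : a / 2 ≤ |f s| := by
      linarith [abs_sub_abs_le_abs_sub (f t) (f s), abs_sub_comm (f t) (f s)]
    calc a ^ 2 / 4 = (a / 2) ^ 2 := by ring
      _ ≤ |f s| ^ 2 := pow_le_pow_left₀ (by positivity) this 2
      _ = f s ^ 2 := sq_abs _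
  have hsub : uIcc p (p + r) ⊆ uIcc c d := by
    rw [uIcc_of_le (by linarith), uIcc_of_le (by linarith)]
    exact Icc_subset_Icc hcp hpd
  calc f t ^ 2 / 4 * r = ∫ _ in p..p + r, a ^ 2 / 4 := by simp [a]; ring
    _ ≤ ∫ s in p..p + r, f s ^ 2 :=
      intervalIntegral.integral_mono_on (by linarith) intervalIntegrable_const
        (hint.mono_set hsub) hlarge
    _ ≤ ∫ s in c..d, f s ^ 2 :=
      intervalIntegral.integral_mono_interval hcp (by linarith) hpd
        (ae_of_all _ fun s => sq_nonneg (f s)) hint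

lemma abs_le_of_integral_sq_le (hK : 0 < K)
    (hf : ∀ s ∈ Icc c d, |f s - f t| ≤ K * |s - t|) (ht : t ∈ Icc c d)
    (hint : IntervalIntegrable (fun s => f s ^ 2) volume c d) {ε : ℝ} (hε : 0 < ε) (hε1 : ε ≤ 1)
    (hcd : ε ^ 2 / (4 * K) < d - c) (hsq : ∫ s in c..d, f s ^ 2 ≤ ε ^ 4 / (64 * K)) :
    |f t| ≤ ε / 2 := by
  by_contra! hlt
  have hsq_lt : ε ^ 2 / 16 < f t ^ 2 / 4 := by
    nlinarith [pow_lt_pow_left₀ hlt (by positivity) two_ne_zero, sq_abs (f t)]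
  have hmin : ε ^ 2 / (4 * K) < min (|f t| / (2 * K)) (d - c) := by
    refine lt_min ?_ hcd
    calc ε ^ 2 / (4 * K) ≤ ε / (4 * K) := by gcongr; nlinarith
      _ = ε / 2 / (2 * K) := by ring
      _ < |f t| / (2 * K) := by gcongr
  refine hsq.not_gt ?_
  calc ε ^ 4 / (64 * K) = ε ^ 2 / 16 * (ε ^ 2 / (4 * K)) := by field_simp; ring
    _ < f t ^ 2 / 4 * min (|f t| / (2 * K)) (d - c) :=
      mul_lt_mul'' hsq_lt hmin (by positivity) (by positivity)
    _ ≤ ∫ s in c..d, f s ^ 2 := sq_div_four_mul_min_le_integral_sq hK.le hf ht hint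

end SquareIntegral

namespace PiecewiseLipschitz

variable {w : ℝ → ℝ → ℝ} {L : ℝ} {Q : ℕ} {α : ℕ → ℝ}

lemma swap (h : PiecewiseLipschitz w L Q α) : PiecewiseLipschitz (fun x y => w y x) L Q α := by
  obtain ⟨h0, hQ, hmono, hlip⟩ := h
  refine ⟨h0, hQ, hmono, fun i hi j hj x₁ hx₁ x₂ hx₂ y₁ hy₁ y₂ hy₂ => ?_⟩
  rw [add_comm]
  exact hlip j hj i hi y₁ hy₁ y₂ hy₂ x₁ hx₁ x₂ hx₂

lemma Icc_subset_Icc_zero_one (h : PiecewiseLipschitz w L Q α) {k : ℕ} (hk : k < Q) :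
    Icc (α k) (α (k + 1)) ⊆ Icc 0 1 := by
  obtain ⟨h0, hQ, hmono, -⟩ := h
  have hα : StrictMonoOn α (Iic Q) := strictMonoOn_Iic_of_lt_succ hmono
  rw [← h0, ← hQ]
  exact Icc_subset_Icc (hα.monotoneOn (by simp) (by simp; omega) (by omega))
    (hα.monotoneOn (by simp; omega) (by simp) hk)

lemma exists_mem_Icc (h : PiecewiseLipschitz w L Q α) (hQ : 0 < Q) {x : ℝ} (hx : x ∈ Icc 0 1) :
    ∃ k < Q, x ∈ Icc (α k) (α (k + 1)) :=
  exists_lt_mem_Icc_succ hQ (h.1 ▸ hx.1) (h.2.1 ▸ hx.2)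

lemma abs_sub_sub_le (h : PiecewiseLipschitz w L Q α) {i i' j : ℕ} (hi : i < Q) (hi' : i' < Q)
    (hj : j < Q) {x y s t : ℝ} (hx : x ∈ Icc (α i) (α (i + 1)))
    (hy : y ∈ Icc (α i') (α (i' + 1))) (hs : s ∈ Icc (α j) (α (j + 1)))
    (ht : t ∈ Icc (α j) (α (j + 1))) :
    |(w x s - w y s) - (w x t - w y t)| ≤ 2 * L * |s - t| := by
  have hx' := h.2.2.2 i hi j hj x hx x hx s hs t ht
  have hy' := h.2.2.2 i' hi' j hj y hy y hy s hs t ht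
  simp only [sub_self, abs_zero, zero_add] at hx' hy'
  calc |(w x s - w y s) - (w x t - w y t)| = |(w x s - w x t) - (w y s - w y t)| := by
        rw [sub_sub_sub_comm]
    _ ≤ |w x s - w x t| + |w y s - w y t| := abs_sub _ _
    _ ≤ 2 * L * |s - t| := by linarith

lemma abs_sub_le_of_integral_sq_sub_le (h : PiecewiseLipschitz w L Q α)
    (hw_meas : Measurable fun p : ℝ × ℝ => w p.1 p.2) (hw01 : ∀ x y, w x y ∈ Icc (0:ℝ) 1)
    (hL : 0 < L) (hQ : 0 < Q) {ε : ℝ} (hε : 0 < ε) (hε1 : ε ≤ 1)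
    (hblock : ∀ k < Q, ε ^ 2 / (8 * L) < α (k + 1) - α k) {x y t : ℝ} (hx : x ∈ Icc (0:ℝ) 1)
    (hy : y ∈ Icc (0:ℝ) 1) (ht : t ∈ Icc (0:ℝ) 1)
    (hrow : ∫ s in (0:ℝ)..1, (w x s - w y s) ^ 2 ≤ ε ^ 4 / (128 * L)) :
    |w x t - w y t| ≤ ε / 2 := by
  obtain ⟨i, hi, hxi⟩ := h.exists_mem_Icc hQ hx
  obtain ⟨i', hi', hyi'⟩ := h.exists_mem_Icc hQ hy
  obtain ⟨j, hj, htj⟩ := h.exists_mem_Icc hQ ht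
  have hmeas : Measurable fun s => (w x s - w y s) ^ 2 :=
    ((hw_meas.comp measurable_prodMk_left).sub (hw_meas.comp measurable_prodMk_left)).pow_const 2
  have hint : IntervalIntegrable (fun s => (w x s - w y s) ^ 2) volume 0 1 := by
    refine (intervalIntegrable_const (c := (1:ℝ))).mono_fun' hmeas.aestronglyMeasurable
      (ae_of_all _ fun s => ?_)
    dsimp only
    rw [Real.norm_eq_abs, abs_pow]
    exact pow_le_one₀ (abs_nonneg _) (abs_sub_le_of_nonneg_of_le (hw01 x s).1 (hw01 x s).2
      (hw01 y s).1 (hw01 y s).2)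
  have hjsub := h.Icc_subset_Icc_zero_one hj
  have hjle : α j ≤ α (j + 1) := htj.1.trans htj.2
  refine abs_le_of_integral_sq_le (K := 2 * L) (by positivity)
    (fun s hs => h.abs_sub_sub_le hi hi' hj hxi hyi' hs htj) htj
    (hint.mono_set ?_) hε hε1 ?_ ?_
  · rw [uIcc_of_le hjle, uIcc_of_le zero_le_one]
    exact hjsub
  · linarith [hblock j hj, show ε ^ 2 / (4 * (2 * L)) = ε ^ 2 / (8 * L) by ring]
  · calc ∫ s in α j..α (j + 1), (w x s - w y s) ^ 2 ≤ ∫ s in (0:ℝ)..1, (w x s - w y s) ^ 2 :=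
          intervalIntegral.integral_mono_interval (hjsub ⟨le_rfl, hjle⟩).1 hjle
            (hjsub ⟨hjle, le_rfl⟩).2
            (ae_of_all _ fun s => sq_nonneg _) hint
      _ ≤ ε ^ 4 / (64 * (2 * L)) := by rwa [show 64 * (2 * L) = 128 * L by ring]

end PiecewiseLipschitz

theorem graphon_value_close_of_slices_close_general
    (w : ℝ → ℝ → ℝ) (hw_meas : Measurable fun p : ℝ × ℝ => w p.1 p.2)
    (hw01 : ∀ x y, w x y ∈ Set.Icc (0:ℝ) 1)
    (L : ℝ) (hL : 0 < L) (Q : ℕ) (hQ : 0 < Q) (α : ℕ → ℝ)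
    (hpl : PiecewiseLipschitz w L Q α)
    (ε : ℝ) (hε : 0 < ε)
    (hεδ : (ε / 2) ^ 2 < 2 * ((Finset.range Q).inf' (Finset.nonempty_range_iff.mpr hQ.ne')
      fun k => α (k + 1) - α k) * L)
    (uip uiv ujp ujv : ℝ)
    (huip : uip ∈ Set.Icc (0:ℝ) 1) (huiv : uiv ∈ Set.Icc (0:ℝ) 1)
    (hujp : ujp ∈ Set.Icc (0:ℝ) 1) (hujv : ujv ∈ Set.Icc (0:ℝ) 1)
    (hri : (∫ t in (0:ℝ)..1, (w uip t - w uiv t) ^ 2) ≤ ε ^ 4 / (128 * L))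
    (hcj : (∫ s in (0:ℝ)..1, (w s ujp - w s ujv) ^ 2) ≤ ε ^ 4 / (128 * L)) :
    |w uiv ujv - w uip ujp| ≤ ε := by
  rcases le_or_gt 1 ε with hε1 | hε1
  · exact (abs_sub_le_of_nonneg_of_le (hw01 _ _).1 (hw01 _ _).2 (hw01 _ _).1 (hw01 _ _).2).trans
      hε1
  have hblock : ∀ k < Q, ε ^ 2 / (8 * L) < α (k + 1) - α k := fun k hk => by
    have := Finset.inf'_le (fun k => α (k + 1) - α k) (Finset.mem_range.mpr hk)
    rw [div_lt_iff₀ (by positivity)]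
    nlinarith
  have hrow := hpl.abs_sub_le_of_integral_sq_sub_le hw_meas hw01 hL hQ hε hε1.le hblock
    huip huiv hujv hri
  have hcol := hpl.swap.abs_sub_le_of_integral_sq_sub_le (hw_meas.comp measurable_swap)
    (fun x y => hw01 y x) hL hQ hε hε1.le hblock hujp hujv huip hcj
  calc |w uiv ujv - w uip ujp| ≤ |w uiv ujv - w uip ujv| + |w uip ujv - w uip ujp| :=
        abs_sub_le _ _ _
    _ ≤ ε := by
      linarith [abs_sub_comm (w uiv ujv) (w uip ujv), abs_sub_comm (w uip ujv) (w uip ujp)]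

theorem graphon_value_close_of_slices_close
    (w : ℝ → ℝ → ℝ) (hw_meas : Measurable fun p : ℝ × ℝ => w p.1 p.2)
    (hw01 : ∀ x y, w x y ∈ Set.Icc (0:ℝ) 1)
    (L : ℝ) (hL : 0 < L) (Q : ℕ) (hQ : 0 < Q) (α : ℕ → ℝ)
    (hpl : PiecewiseLipschitz w L Q α)
    (ε : ℝ) (hε : 0 < ε)
    (hεδ : (ε / 2) ^ 2 < 2 * ((Finset.range Q).inf' (Finset.nonempty_range_iff.mpr hQ.ne')
      fun k => α (k + 1) - α k) * L)
    (uip uiv ujp ujv : ℝ)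
    (huip : uip ∈ Set.Icc (0:ℝ) 1) (huiv : uiv ∈ Set.Icc (0:ℝ) 1)
    (hujp : ujp ∈ Set.Icc (0:ℝ) 1) (hujv : ujv ∈ Set.Icc (0:ℝ) 1)
    (hci : (∫ s in (0:ℝ)..1, (w s uip - w s uiv) ^ 2) ≤ ε ^ 4 / (128 * L))
    (hri : (∫ t in (0:ℝ)..1, (w uip t - w uiv t) ^ 2) ≤ ε ^ 4 / (128 * L))
    (hcj : (∫ s in (0:ℝ)..1, (w s ujp - w s ujv) ^ 2) ≤ ε ^ 4 / (128 * L))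
    (hrj : (∫ t in (0:ℝ)..1, (w ujp t - w ujv t) ^ 2) ≤ ε ^ 4 / (128 * L)) :
    |w uiv ujv - w uip ujp| ≤ ε :=
  graphon_value_close_of_slices_close_general w hw_meas hw01 L hL Q hQ α hpl ε hε hεδ uip uiv ujp
    ujv huip huiv hujp hujv hri hcj
end
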